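/- Let S be a nonnegative integrable random variable that is NWU, with complementary cdf F̄, and let Y₁,…,Y_N be i.i.d. copies of S. Then for every 1 ≤ d ≤ N: N · E[min{Y₁,…,Y_N}] ≤ d · E[min{Y₁,…,Y_d}]. Equivalently, d ↦ d·∫₀^∞ F̄(t)^d dt is nonincreasing when restricted to the values d and N. For NBU distributions the reverse inequality holds. -/

import Mathlib

/-!
Write `F̄ t = μ (t, ∞)` for the law `μ` of `S` and `L n = ∫₀^∞ F̄ ^ n`; by independence and the
layer-cake formula, `E[min of n copies] = L n`, so it suffices to compare consecutive `n`.
Since `F̄ ^ n - F̄ ^ (n + 1) = F̄ ^ n · μ (-∞, t]`, Fubini gives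
`L n - L (n + 1) = ∫ (∫_{t ≥ s} F̄ t ^ n dt) dμ(s)`. Shifting `t = s + u`, the NWU property bounds
the inner integral below by `μ [s, ∞) ^ n · L n`. Among `n + 1` i.i.d. copies one always attains
the minimum, and all copies are equally likely to, so `∫ μ [s, ∞) ^ n dμ(s) ≥ 1 / (n + 1)`.
Hence `L n - L (n + 1) ≥ L n / (n + 1)`, i.e. `(n + 1) L (n + 1) ≤ n L n`. For NBU everything
reverses, with `μ (s, ∞)` in place of `μ [s, ∞)` and the disjoint events "copy `i` is the strict
minimum".
-/

open MeasureTheory ProbabilityTheory Finset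
open Set Filter Topology
open scoped ENNReal

def IsNWU (μ : Measure ℝ) : Prop :=
  ∀ t₁ t₂, 0 ≤ t₁ → 0 ≤ t₂ → μ (Ioi t₁) * μ (Ioi t₂) ≤ μ (Ioi (t₁ + t₂))

def IsNBU (μ : Measure ℝ) : Prop :=
  ∀ t₁ t₂, 0 ≤ t₁ → 0 ≤ t₂ → μ (Ioi (t₁ + t₂)) ≤ μ (Ioi t₁) * μ (Ioi t₂)

noncomputable def survivalPowIntegral (μ : Measure ℝ) (n : ℕ) : ℝ≥0∞ :=
  ∫⁻ t in Ioi 0, μ (Ioi t) ^ n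

theorem isNWU_iff_measureReal {μ : Measure ℝ} [IsFiniteMeasure μ] :
    IsNWU μ ↔ ∀ t₁ t₂, 0 ≤ t₁ → 0 ≤ t₂ →
      μ.real (Ioi t₁) * μ.real (Ioi t₂) ≤ μ.real (Ioi (t₁ + t₂)) := by
  refine forall₄_congr fun t₁ t₂ _ _ => ?_
  rw [measureReal_def, measureReal_def, measureReal_def, ← ENNReal.toReal_mul,
    ENNReal.toReal_le_toReal (by finiteness) (measure_ne_top _ _)]

theorem isNBU_iff_measureReal {μ : Measure ℝ} [IsFiniteMeasure μ] :
    IsNBU μ ↔ ∀ t₁ t₂, 0 ≤ t₁ → 0 ≤ t₂ →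
      μ.real (Ioi (t₁ + t₂)) ≤ μ.real (Ioi t₁) * μ.real (Ioi t₂) := by
  refine forall₄_congr fun t₁ t₂ _ _ => ?_
  rw [measureReal_def, measureReal_def, measureReal_def, ← ENNReal.toReal_mul,
    ENNReal.toReal_le_toReal (measure_ne_top _ _) (by finiteness)]

theorem MeasureTheory.Measure.pi_setOf_forall_succAbove {β : Type*} [MeasurableSpace β]
    (μ : Measure β) [SigmaFinite μ] {d : ℕ} (i : Fin (d + 1)) {s : Set (β × β)}
    (hs : MeasurableSet s) :
    Measure.pi (fun _ : Fin (d + 1) => μ) {x | ∀ j, (x i, x (i.succAbove j)) ∈ s} =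
      ∫⁻ a, μ (Prod.mk a ⁻¹' s) ^ d ∂μ := by
  set T : Set (β × (Fin d → β)) := {p | ∀ j, (p.1, p.2 j) ∈ s}
  have hT : MeasurableSet T := by
    simp only [T, ofPred_forall]
    exact .iInter fun j => hs.preimage (by fun_prop)
  have hpre : {x : Fin (d + 1) → β | ∀ j, (x i, x (i.succAbove j)) ∈ s} =
      MeasurableEquiv.piFinSuccAbove (fun _ => β) i ⁻¹' T := rfl
  rw [hpre, (measurePreserving_piFinSuccAbove (fun _ => μ) i).measure_preimage
    hT.nullMeasurableSet, Measure.prod_apply hT]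
  refine lintegral_congr fun a => ?_
  have : Prod.mk a ⁻¹' T = Set.univ.pi fun _ => Prod.mk a ⁻¹' s := by ext; simp [T]
  rw [this, Measure.pi_pi, prod_const, card_univ, Fintype.card_fin]

section LinearOrder

variable {α : Type*} [MeasurableSpace α] [LinearOrder α] [TopologicalSpace α]
  [OrderClosedTopology α] [SecondCountableTopology α] [OpensMeasurableSpace α]

theorem lintegral_mul_measure_Iic (ρ μ : Measure α) [SFinite ρ] [SFinite μ] {f : α → ℝ≥0∞}
    (hf : Measurable f) :
    ∫⁻ t, f t * μ (Iic t) ∂ρ = ∫⁻ s, ∫⁻ t in Ici s, f t ∂ρ ∂μ := by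
  set F : α × α → ℝ≥0∞ := {p | p.2 ≤ p.1}.indicator fun p => f p.1
  have hF : Measurable F :=
    (hf.comp measurable_fst).indicator (measurableSet_le measurable_snd measurable_fst)
  calc ∫⁻ t, f t * μ (Iic t) ∂ρ = ∫⁻ t, ∫⁻ s, F (t, s) ∂μ ∂ρ := by
        refine lintegral_congr fun t => ?_
        rw [← lintegral_indicator_const measurableSet_Iic]
        rfl
    _ = ∫⁻ s, ∫⁻ t, F (t, s) ∂ρ ∂μ := lintegral_lintegral_swap hF.aemeasurable
    _ = ∫⁻ s, ∫⁻ t in Ici s, f t ∂ρ ∂μ := by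
        refine lintegral_congr fun s => ?_
        rw [← lintegral_indicator measurableSet_Ici]
        rfl

variable (μ : Measure α) [IsProbabilityMeasure μ]

theorem one_le_mul_lintegral_measure_Ici_pow (d : ℕ) :
    1 ≤ (d + 1 : ℝ≥0∞) * ∫⁻ a, μ (Ici a) ^ d ∂μ := by
  set E : Fin (d + 1) → Set (Fin (d + 1) → α) := fun i => {x | ∀ j, x i ≤ x (i.succAbove j)}
  have hE : ∀ i, Measure.pi (fun _ => μ) (E i) = ∫⁻ a, μ (Ici a) ^ d ∂μ := fun i =>
    Measure.pi_setOf_forall_succAbove μ i (measurableSet_le measurable_fst measurable_snd)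
  have hcover : (⋃ i, E i) = univ := by
    refine eq_univ_of_forall fun x => ?_
    obtain ⟨i, hi⟩ := Finite.exists_min x
    exact mem_iUnion.2 ⟨i, fun j => hi _⟩
  calc (1 : ℝ≥0∞) = Measure.pi (fun _ => μ) (⋃ i, E i) := by simp [hcover]
    _ ≤ ∑ i, Measure.pi (fun _ => μ) (E i) := measure_iUnion_fintype_le _ _
    _ = (d + 1 : ℝ≥0∞) * ∫⁻ a, μ (Ici a) ^ d ∂μ := by simp [hE]

theorem mul_lintegral_measure_Ioi_pow_le_one (d : ℕ) :
    (d + 1 : ℝ≥0∞) * ∫⁻ a, μ (Ioi a) ^ d ∂μ ≤ 1 := by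
  set E : Fin (d + 1) → Set (Fin (d + 1) → α) := fun i => {x | ∀ j, x i < x (i.succAbove j)}
  have hE : ∀ i, Measure.pi (fun _ => μ) (E i) = ∫⁻ a, μ (Ioi a) ^ d ∂μ := fun i =>
    Measure.pi_setOf_forall_succAbove μ i (measurableSet_lt measurable_fst measurable_snd)
  have hmeas : ∀ i, MeasurableSet (E i) := fun i => by
    simp only [E, ofPred_forall]
    exact .iInter fun j => measurableSet_lt (measurable_pi_apply _) (measurable_pi_apply _)
  have hdisj : Pairwise (Function.onFun Disjoint E) := by
    intro i i' hii'
    refine Set.disjoint_left.2 fun x hx hx' => ?_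
    obtain ⟨j, hj⟩ := Fin.exists_succAbove_eq hii'
    obtain ⟨j', hj'⟩ := Fin.exists_succAbove_eq hii'.symm
    exact lt_asymm (hj' ▸ hx j') (hj ▸ hx' j)
  calc (d + 1 : ℝ≥0∞) * ∫⁻ a, μ (Ioi a) ^ d ∂μ = ∑ i, Measure.pi (fun _ => μ) (E i) := by
        simp [hE]
    _ = Measure.pi (fun _ => μ) (⋃ i, E i) := by rw [measure_iUnion hdisj hmeas, tsum_fintype]
    _ ≤ 1 := prob_le_one

end LinearOrder

theorem setLIntegral_Ioi_zero_comp_const_add (s : ℝ) (f : ℝ → ℝ≥0∞) :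
    ∫⁻ u in Ioi 0, f (s + u) = ∫⁻ t in Ioi s, f t := by
  have h := (measurePreserving_add_left volume s).setLIntegral_comp_preimage_emb
    (measurableEmbedding_addLeft s) f (Ioi s)
  rwa [preimage_const_add_Ioi, sub_self] at h

theorem measurable_measure_Ioi (μ : Measure ℝ) : Measurable fun t => μ (Ioi t) :=
  Antitone.measurable fun _ _ hst => measure_mono (Ioi_subset_Ioi hst)

section ProbabilityMeasure

variable {μ : Measure ℝ} [IsProbabilityMeasure μ]

theorem continuousWithinAt_measure_Ioi (u : ℝ) :
    ContinuousWithinAt (fun t => μ (Ioi t)) (Ici u) u := by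
  have h : (fun t => μ (Ioi t)) = fun t => 1 - ENNReal.ofReal (cdf μ t) := by
    ext t
    rw [ofReal_cdf, ← prob_compl_eq_one_sub measurableSet_Iic, compl_Iic]
  rw [h]
  exact ((ENNReal.continuous_sub_left ENNReal.one_ne_top).comp
    ENNReal.continuous_ofReal).continuousAt.comp_continuousWithinAt ((cdf μ).right_continuous u)

theorem IsNWU.measure_Ici_mul_measure_Ioi_le (h : IsNWU μ) {s u : ℝ} (hs : 0 ≤ s)
    (hu : 0 ≤ u) : μ (Ici s) * μ (Ioi u) ≤ μ (Ioi (s + u)) := by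
  rcases hs.eq_or_lt with rfl | hs
  · simpa using mul_le_of_le_one_left zero_le (prob_le_one (μ := μ) (s := Ici 0))
  have hlim : Tendsto (fun x => μ (Ici s) * μ (Ioi x)) (𝓝[>] u) (𝓝 (μ (Ici s) * μ (Ioi u))) :=
    ENNReal.Tendsto.const_mul ((continuousWithinAt_measure_Ioi u).mono Ioi_subset_Ici_self)
      (Or.inr (measure_ne_top _ _))
  -- `[s, ∞) ⊆ (s + u - x, ∞)` for `x > u`; let `x` decrease to `u`.
  refine le_of_tendsto hlim ?_
  filter_upwards [Ioo_mem_nhdsGT (by linarith : u < u + s)] with x ⟨hux, hxs⟩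
  calc μ (Ici s) * μ (Ioi x) ≤ μ (Ioi (s + u - x)) * μ (Ioi x) := by
        gcongr
        linarith
    _ ≤ μ (Ioi (s + u - x + x)) := h _ _ (by linarith) (by linarith)
    _ = μ (Ioi (s + u)) := by rw [sub_add_cancel]

theorem survivalPowIntegral_antitone : Antitone (survivalPowIntegral μ) := fun _ _ hmn =>
  lintegral_mono fun _ => pow_le_pow_of_le_one zero_le prob_le_one hmn

theorem survivalPowIntegral_sub_succ (n : ℕ) (h : survivalPowIntegral μ (n + 1) ≠ ∞) :
    survivalPowIntegral μ n - survivalPowIntegral μ (n + 1) =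
      ∫⁻ s, (∫⁻ t in Ici s ∩ Ioi 0, μ (Ioi t) ^ n) ∂μ := by
  have hsub : ∀ t, μ (Ioi t) ^ n - μ (Ioi t) ^ (n + 1) = μ (Ioi t) ^ n * μ (Iic t) := fun t => by
    rw [← compl_Ioi, prob_compl_eq_one_sub measurableSet_Ioi,
      ENNReal.mul_sub fun _ _ => ENNReal.pow_ne_top (measure_ne_top _ _), mul_one, pow_succ]
  rw [survivalPowIntegral, survivalPowIntegral,
    ← lintegral_sub ((measurable_measure_Ioi μ).pow_const _) h
      (ae_of_all _ fun _ => pow_le_pow_of_le_one zero_le prob_le_one n.le_succ)]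
  simp only [hsub, lintegral_mul_measure_Iic _ _ ((measurable_measure_Ioi μ).pow_const n),
    Measure.restrict_restrict measurableSet_Ici]

theorem IsNWU.measure_Ici_pow_mul_le (h : IsNWU μ) (n : ℕ) {s : ℝ} (hs : 0 ≤ s) :
    μ (Ici s) ^ n * survivalPowIntegral μ n ≤ ∫⁻ t in Ici s ∩ Ioi 0, μ (Ioi t) ^ n :=
  calc μ (Ici s) ^ n * survivalPowIntegral μ n = ∫⁻ u in Ioi 0, (μ (Ici s) * μ (Ioi u)) ^ n := by
        simp only [survivalPowIntegral, mul_pow]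
        rw [lintegral_const_mul' _ _ (ENNReal.pow_ne_top (measure_ne_top _ _))]
    _ ≤ ∫⁻ u in Ioi 0, μ (Ioi (s + u)) ^ n := setLIntegral_mono' measurableSet_Ioi fun u hu =>
        pow_le_pow_left₀ zero_le (h.measure_Ici_mul_measure_Ioi_le hs (le_of_lt hu)) n
    _ = ∫⁻ t in Ioi s, μ (Ioi t) ^ n :=
        setLIntegral_Ioi_zero_comp_const_add s fun t => μ (Ioi t) ^ n
    _ ≤ ∫⁻ t in Ici s ∩ Ioi 0, μ (Ioi t) ^ n :=
        lintegral_mono_set fun t (ht : s < t) => ⟨ht.le, hs.trans_lt ht⟩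

theorem IsNBU.le_measure_Ioi_pow_mul (h : IsNBU μ) (n : ℕ) {s : ℝ} (hs : 0 ≤ s) :
    ∫⁻ t in Ici s ∩ Ioi 0, μ (Ioi t) ^ n ≤ μ (Ioi s) ^ n * survivalPowIntegral μ n :=
  calc ∫⁻ t in Ici s ∩ Ioi 0, μ (Ioi t) ^ n ≤ ∫⁻ t in Ici s, μ (Ioi t) ^ n :=
        lintegral_mono_set inter_subset_left
    _ = ∫⁻ u in Ioi 0, μ (Ioi (s + u)) ^ n := by
        rw [← Measure.restrict_congr_set Ioi_ae_eq_Ici, ← setLIntegral_Ioi_zero_comp_const_add]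
    _ ≤ ∫⁻ u in Ioi 0, (μ (Ioi s) * μ (Ioi u)) ^ n := setLIntegral_mono' measurableSet_Ioi
        fun u hu => pow_le_pow_left₀ zero_le (h s u hs (le_of_lt hu)) n
    _ = μ (Ioi s) ^ n * survivalPowIntegral μ n := by
        simp only [survivalPowIntegral, mul_pow]
        rw [lintegral_const_mul' _ _ (ENNReal.pow_ne_top (measure_ne_top _ _))]

theorem IsNWU.succ_mul_survivalPowIntegral_le (h : IsNWU μ) (hμ : ∀ᵐ s ∂μ, 0 ≤ s) {n : ℕ}
    (hn : survivalPowIntegral μ n ≠ ∞) :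
    (n + 1 : ℝ) * (survivalPowIntegral μ (n + 1)).toReal ≤
      n * (survivalPowIntegral μ n).toReal := by
  set A := survivalPowIntegral μ n
  set B := survivalPowIntegral μ (n + 1)
  have hBA : B ≤ A := survivalPowIntegral_antitone n.le_succ
  have key : A ≤ (n + 1) * (A - B) :=
    calc A = 1 * A := (one_mul A).symm
      _ ≤ ((n + 1) * ∫⁻ s, μ (Ici s) ^ n ∂μ) * A := by
          gcongr; exact one_le_mul_lintegral_measure_Ici_pow μ n
      _ = (n + 1) * ∫⁻ s, μ (Ici s) ^ n * A ∂μ := by rw [mul_assoc, lintegral_mul_const' _ _ hn]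
      _ ≤ (n + 1) * ∫⁻ s, (∫⁻ t in Ici s ∩ Ioi 0, μ (Ioi t) ^ n) ∂μ := by
          refine mul_le_mul_right ?_ _
          exact lintegral_mono_ae (hμ.mono fun s hs => h.measure_Ici_pow_mul_le n hs)
      _ = (n + 1) * (A - B) := by rw [survivalPowIntegral_sub_succ n (ne_top_of_le_ne_top hn hBA)]
  have := ENNReal.toReal_mono (ENNReal.mul_ne_top (by simp) (ENNReal.sub_ne_top hn)) key
  rw [ENNReal.toReal_mul, ENNReal.toReal_sub_of_le hBA hn,
    ENNReal.toReal_add (ENNReal.natCast_ne_top n) ENNReal.one_ne_top, ENNReal.toReal_natCast,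
    ENNReal.toReal_one] at this
  linarith

theorem IsNBU.mul_survivalPowIntegral_le_succ (h : IsNBU μ) (hμ : ∀ᵐ s ∂μ, 0 ≤ s) {n : ℕ}
    (hn : survivalPowIntegral μ n ≠ ∞) :
    n * (survivalPowIntegral μ n).toReal ≤
      (n + 1 : ℝ) * (survivalPowIntegral μ (n + 1)).toReal := by
  set A := survivalPowIntegral μ n
  set B := survivalPowIntegral μ (n + 1)
  have hBA : B ≤ A := survivalPowIntegral_antitone n.le_succ
  have key : (n + 1) * (A - B) ≤ A :=
    calc (n + 1) * (A - B) = (n + 1) * ∫⁻ s, (∫⁻ t in Ici s ∩ Ioi 0, μ (Ioi t) ^ n) ∂μ := by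
          rw [survivalPowIntegral_sub_succ n (ne_top_of_le_ne_top hn hBA)]
      _ ≤ (n + 1) * ∫⁻ s, μ (Ioi s) ^ n * A ∂μ := by
          refine mul_le_mul_right ?_ _
          exact lintegral_mono_ae (hμ.mono fun s hs => h.le_measure_Ioi_pow_mul n hs)
      _ = ((n + 1) * ∫⁻ s, μ (Ioi s) ^ n ∂μ) * A := by rw [mul_assoc, lintegral_mul_const' _ _ hn]
      _ ≤ 1 * A := by gcongr; exact mul_lintegral_measure_Ioi_pow_le_one μ n
      _ = A := one_mul A
  have := ENNReal.toReal_mono hn key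
  rw [ENNReal.toReal_mul, ENNReal.toReal_sub_of_le hBA hn,
    ENNReal.toReal_add (ENNReal.natCast_ne_top n) ENNReal.one_ne_top, ENNReal.toReal_natCast,
    ENNReal.toReal_one] at this
  linarith

theorem IsNWU.antitoneOn_mul_survivalPowIntegral (h : IsNWU μ) (hμ : ∀ᵐ s ∂μ, 0 ≤ s)
    (h1 : survivalPowIntegral μ 1 ≠ ∞) :
    AntitoneOn (fun n : ℕ => n * (survivalPowIntegral μ n).toReal) (Ici 1) :=
  antitoneOn_nat_Ici_of_succ_le fun _ hn => by
    exact_mod_cast h.succ_mul_survivalPowIntegral_le hμ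
      (ne_top_of_le_ne_top h1 (survivalPowIntegral_antitone hn))

theorem IsNBU.monotoneOn_mul_survivalPowIntegral (h : IsNBU μ) (hμ : ∀ᵐ s ∂μ, 0 ≤ s)
    (h1 : survivalPowIntegral μ 1 ≠ ∞) :
    MonotoneOn (fun n : ℕ => n * (survivalPowIntegral μ n).toReal) (Ici 1) :=
  monotoneOn_nat_Ici_of_le_succ fun _ hn => by
    exact_mod_cast h.mul_survivalPowIntegral_le_succ hμ
      (ne_top_of_le_ne_top h1 (survivalPowIntegral_antitone hn))

end ProbabilityMeasure

theorem lt_ciInf_iff_of_finite {α ι : Type*} [ConditionallyCompleteLinearOrder α] [Finite ι]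
    [Nonempty ι] {f : ι → α} {a : α} : a < ⨅ i, f i ↔ ∀ i, a < f i := by
  refine ⟨fun h i => h.trans_le (ciInf_le (Finite.bddBelow_range f) i), fun h => ?_⟩
  obtain ⟨i, hi⟩ := exists_eq_ciInf_of_finite (f := f)
  exact hi ▸ h i

section IID

variable {Ω : Type*} [MeasurableSpace Ω] {P : Measure Ω} {X : Ω → ℝ}

theorem survivalPowIntegral_map_one_ne_top (hX : 0 ≤ᵐ[P] X) (hXi : Integrable X P) :
    survivalPowIntegral (P.map X) 1 ≠ ∞ := by
  have h := lintegral_eq_lintegral_meas_lt P hX hXi.aemeasurable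
  simp only [survivalPowIntegral, pow_one,
    Measure.map_apply_of_aemeasurable hXi.aemeasurable measurableSet_Ioi]
  exact h ▸ hXi.lintegral_lt_top.ne

variable {ι : Type*} [Fintype ι] [Nonempty ι] {Z : ι → Ω → ℝ}

theorem ProbabilityTheory.iIndepFun.measure_lt_iInf (hZ : iIndepFun Z P)
    (hid : ∀ i, IdentDistrib (Z i) X P P) (t : ℝ) :
    P {ω | t < ⨅ i, Z i ω} = P.map X (Ioi t) ^ Fintype.card ι := by
  have hset : {ω | t < ⨅ i, Z i ω} = ⋂ i ∈ (univ : Finset ι), Z i ⁻¹' Ioi t := by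
    ext ω
    simp [lt_ciInf_iff_of_finite]
  rw [hset, hZ.measure_inter_preimage_eq_mul univ fun _ _ => measurableSet_Ioi,
    Measure.map_apply_of_aemeasurable (hid (Classical.arbitrary ι)).aemeasurable_snd
      measurableSet_Ioi]
  simp only [(hid _).measure_mem_eq measurableSet_Ioi, prod_const, card_univ]

theorem ProbabilityTheory.iIndepFun.integral_iInf (hZ : iIndepFun Z P)
    (hid : ∀ i, IdentDistrib (Z i) X P P) (hX : 0 ≤ᵐ[P] X) :
    ∫ ω, ⨅ i, Z i ω ∂P = (survivalPowIntegral (P.map X) (Fintype.card ι)).toReal := by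
  have hnn : 0 ≤ᵐ[P] fun ω => ⨅ i, Z i ω := by
    filter_upwards [ae_all_iff.2 fun i => (hid i).symm.ae_snd measurableSet_Ici hX] with ω hω
    exact le_ciInf hω
  have hm : AEMeasurable (fun ω => ⨅ i, Z i ω) P := .iInf fun i => (hid i).aemeasurable_fst
  rw [integral_eq_lintegral_of_nonneg_ae hnn hm.aestronglyMeasurable,
    lintegral_eq_lintegral_meas_lt P hnn hm]
  simp only [hZ.measure_lt_iInf hid, survivalPowIntegral]

end IID

theorem aggregate_resource_usage_monotone_general
    {Ω : Type*} [MeasurableSpace Ω] (P : Measure Ω) [IsProbabilityMeasure P]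
    (S : Ω → ℝ) (hS : ∀ ω, 0 ≤ S ω) (hSint : Integrable S P)
    (Fbar : ℝ → ℝ) (hFbar : ∀ t, Fbar t = (P {ω | t < S ω}).toReal)
    (N : ℕ) (Y : Fin N → Ω → ℝ)
    (hindep : iIndepFun Y P)
    (hid : ∀ i, IdentDistrib (Y i) S P P)
    (d : ℕ) (hd1 : 1 ≤ d) (hdN : d ≤ N) :
    ((∀ t₁ t₂ : ℝ, 0 ≤ t₁ → 0 ≤ t₂ → Fbar (t₁ + t₂) ≥ Fbar t₁ * Fbar t₂) →
      (N : ℝ) * ∫ ω, (⨅ i : Fin N, Y i ω) ∂P ≤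
        (d : ℝ) * ∫ ω, (⨅ i : Fin d, Y (Fin.castLE hdN i) ω) ∂P) ∧
    ((∀ t₁ t₂ : ℝ, 0 ≤ t₁ → 0 ≤ t₂ → Fbar (t₁ + t₂) ≤ Fbar t₁ * Fbar t₂) →
      (d : ℝ) * ∫ ω, (⨅ i : Fin d, Y (Fin.castLE hdN i) ω) ∂P ≤
        (N : ℝ) * ∫ ω, (⨅ i : Fin N, Y i ω) ∂P) := by
  have : Nonempty (Fin d) := ⟨⟨0, hd1⟩⟩
  have : Nonempty (Fin N) := ⟨⟨0, hd1.trans hdN⟩⟩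
  have hSm := hSint.aemeasurable
  have := Measure.isProbabilityMeasure_map (μ := P) hSm
  have hμ : ∀ᵐ s ∂(P.map S), 0 ≤ s := (ae_map_iff hSm measurableSet_Ici).2 (ae_of_all _ hS)
  have h1 := survivalPowIntegral_map_one_ne_top (ae_of_all _ hS) hSint
  have hF : ∀ t, Fbar t = (P.map S).real (Ioi t) := fun t => by
    rw [hFbar, measureReal_def, Measure.map_apply_of_aemeasurable hSm measurableSet_Ioi]
    rfl
  have hEN := hindep.integral_iInf hid (ae_of_all _ hS)
  have hEd := (hindep.precomp (Fin.castLE_injective hdN)).integral_iInf (fun _ => hid _)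
    (ae_of_all _ hS)
  rw [Fintype.card_fin] at hEN hEd
  rw [hEN, hEd]
  refine ⟨fun hnwu => ?_, fun hnbu => ?_⟩
  · have h : IsNWU (P.map S) := isNWU_iff_measureReal.2 fun t₁ t₂ h₁ h₂ => by
      simpa only [hF] using hnwu t₁ t₂ h₁ h₂
    exact h.antitoneOn_mul_survivalPowIntegral hμ h1 hd1 (hd1.trans hdN) hdN
  · have h : IsNBU (P.map S) := isNBU_iff_measureReal.2 fun t₁ t₂ h₁ h₂ => by
      simpa only [hF] using hnbu t₁ t₂ h₁ h₂
    exact h.monotoneOn_mul_survivalPowIntegral hμ h1 hd1 (hd1.trans hdN) hdN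

/-- Aggregate resource usage `G(d) = d * E[min{Y₁,…,Y_d}]` of `d` simultaneously started
replicas: for i.i.d. copies `Y i` of `S` and any `1 ≤ d ≤ N`, if `S` is NWU then
`N * E[min of all N] ≤ d * E[min of first d]`; for NBU the reverse inequality holds. -/
theorem aggregate_resource_usage_monotone
    {Ω : Type*} [MeasurableSpace Ω] (P : Measure Ω) [IsProbabilityMeasure P]
    (S : Ω → ℝ) (hS : ∀ ω, 0 ≤ S ω) (hSint : Integrable S P)
    (Fbar : ℝ → ℝ) (hFbar : ∀ t, Fbar t = (P {ω | t < S ω}).toReal)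
    (N : ℕ) (hN : 0 < N) (Y : Fin N → Ω → ℝ)
    (hYmeas : ∀ i, Measurable (Y i))
    (hindep : iIndepFun Y P)
    (hid : ∀ i, IdentDistrib (Y i) S P P)
    (d : ℕ) (hd1 : 1 ≤ d) (hdN : d ≤ N) :
    ((∀ t₁ t₂ : ℝ, 0 ≤ t₁ → 0 ≤ t₂ → Fbar (t₁ + t₂) ≥ Fbar t₁ * Fbar t₂) →
      (N : ℝ) * ∫ ω, (⨅ i : Fin N, Y i ω) ∂P ≤
        (d : ℝ) * ∫ ω, (⨅ i : Fin d, Y (Fin.castLE hdN i) ω) ∂P) ∧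
    ((∀ t₁ t₂ : ℝ, 0 ≤ t₁ → 0 ≤ t₂ → Fbar (t₁ + t₂) ≤ Fbar t₁ * Fbar t₂) →
      (d : ℝ) * ∫ ω, (⨅ i : Fin d, Y (Fin.castLE hdN i) ω) ∂P ≤
        (N : ℝ) * ∫ ω, (⨅ i : Fin N, Y i ω) ∂P) :=
  aggregate_resource_usage_monotone_general P S hS hSint Fbar hFbar N Y hindep hid d hd1 hdN
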